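/- arXiv:2109.02105 — 3 statements merged into one kernel-verified Lean document; each statement's English description precedes it below -/
import Mathlib

section
/- Let G be a gyrogroup. For all a, b ∈ G and all permutations α, β of G fixing the identity e, the permutation gyr[a, α(b)] ∘ L_{⊖α(b)} ∘ α ∘ L_b ∘ β fixes e, and (L_a ∘ α) ∘ (L_b ∘ β) = L_{a ⊕ α(b)} ∘ (gyr[a, α(b)] ∘ L_{⊖α(b)} ∘ α ∘ L_b ∘ β). -/
/-- A gyrogroup: a set with a binary operation `op`, a left identity `e`, left inverses
`inv`, and gyroautomorphisms `gyr a b` (bijective and operation-preserving) satisfying the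
left gyroassociative law and the left loop property. -/
class Gyrogroup (G : Type*) where
  /-- the gyrogroup operation `⊕` -/
  op : G → G → G
  /-- the identity element -/
  e : G
  /-- the inverse `⊖a` -/
  inv : G → G
  /-- (G1) `e ⊕ a = a` -/
  op_e : ∀ a : G, op e a = a
  /-- (G2) `⊖a ⊕ a = e` -/
  op_inv : ∀ a : G, op (inv a) a = e
  /-- the gyroautomorphism `gyr[a, b]` -/
  gyr : G → G → G → G
  /-- (G3) `gyr[a, b]` is bijective -/
  gyr_bijective : ∀ a b : G, Function.Bijective (gyr a b)
  /-- (G3) `gyr[a, b]` preserves the operation -/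
  gyr_op : ∀ a b x y : G, gyr a b (op x y) = op (gyr a b x) (gyr a b y)
  /-- (G3) the left gyroassociative law -/
  gyrassoc : ∀ a b c : G, op a (op b c) = op (op a b) (gyr a b c)
  /-- (G4) the left loop property -/
  loop : ∀ a b : G, gyr (op a b) b = gyr a b

namespace Gyrogroup

variable {G : Type*} [Gyrogroup G]

theorem key (x z : G) : op (inv x) (op x z) = gyr (inv x) x z := by
  rw [gyrassoc, op_inv, op_e]

theorem L_injective (x : G) : Function.Injective (op x) := by
  intro z₁ z₂ h
  have h1 : gyr (inv x) x z₁ = gyr (inv x) x z₂ := by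
    rw [← key, ← key, h]
  exact (gyr_bijective (inv x) x).1 h1

theorem L_surjective (x : G) : Function.Surjective (op x) := by
  intro w
  obtain ⟨z, hz⟩ := (gyr_bijective (inv x) x).2 (op (inv x) w)
  exact ⟨z, L_injective (inv x) (by rw [key, hz])⟩

theorem L_bijective (x : G) : Function.Bijective (op x) :=
  ⟨L_injective x, L_surjective x⟩

/-- The left gyrotranslation `L_a : x ↦ a ⊕ x` as a permutation of `G`. -/
noncomputable def Lperm (a : G) : Equiv.Perm G := Equiv.ofBijective (op a) (L_bijective a)

/-- The gyroautomorphism `gyr[a, b]` as a permutation of `G`. -/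
noncomputable def gyrPerm (a b : G) : Equiv.Perm G := Equiv.ofBijective (gyr a b) (gyr_bijective a b)

/-- `GYR(G)`: the subgroup of `Sym(G)` generated by all gyroautomorphisms. -/
def GYR (G : Type*) [Gyrogroup G] : Subgroup (Equiv.Perm G) :=
  Subgroup.closure {π : Equiv.Perm G | ∃ a b : G, π = gyrPerm a b}

/-- `Γₘ = {L_a ∘ γ : a ∈ G, γ ∈ GYR(G)}`, a subgroup of `Sym(G)`. -/
def Γm (G : Type*) [Gyrogroup G] : Set (Equiv.Perm G) :=
  {T : Equiv.Perm G | ∃ a : G, ∃ γ ∈ GYR G, T = Lperm a * γ}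

end Gyrogroup


namespace Gyrogroup
variable {G : Type*} [Gyrogroup G]

theorem gyr_e_left (b c : G) : gyr e b c = c := by
  have h := gyrassoc e b c
  rw [op_e, op_e] at h
  exact (L_injective b h).symm

theorem gyr_inv_self (x c : G) : gyr (inv x) x c = c := by
  have h := loop (inv x) x
  rw [op_inv] at h
  rw [← h, gyr_e_left]

theorem left_cancel (x z : G) : op (inv x) (op x z) = z := by
  rw [key, gyr_inv_self]

theorem op_e_right (x : G) : op x e = x := by
  apply L_injective (inv x)
  rw [left_cancel, op_inv]

theorem inv_inv (x : G) : inv (inv x) = x := by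
  have h := left_cancel (inv x) x
  rwa [op_inv, op_e_right] at h

theorem op_inv_right (x : G) : op x (inv x) = e := by
  have h := op_inv (inv x)
  rwa [inv_inv] at h

theorem gyr_self_inv (x c : G) : gyr x (inv x) c = c := by
  have h := loop x (inv x)
  rw [op_inv_right] at h
  rw [← h, gyr_e_left]

theorem left_cancel' (x w : G) : op x (op (inv x) w) = w := by
  rw [gyrassoc, op_inv_right, gyr_self_inv, op_e]

theorem gyr_e_right (a b : G) : gyr a b e = e := by
  have h := gyrassoc a b e
  rw [op_e_right] at h
  conv_lhs at h => rw [← op_e_right (op a b)]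
  exact (L_injective _ h).symm

theorem Lperm_apply (a x : G) : Lperm a x = op a x := rfl
theorem gyrPerm_apply (a b x : G) : gyrPerm a b x = gyr a b x := rfl

end Gyrogroup

open Gyrogroup in
/-- For `a, b ∈ G` and permutations `α, β` of `G` fixing the identity `e`, the permutation
`gyr[a, α(b)] ∘ L_{⊖α(b)} ∘ α ∘ L_b ∘ β` fixes `e`, and
`(L_a ∘ α) ∘ (L_b ∘ β) = L_{a ⊕ α(b)} ∘ (gyr[a, α(b)] ∘ L_{⊖α(b)} ∘ α ∘ L_b ∘ β)`. -/
theorem stmt7 {G : Type*} [Gyrogroup G] (a b : G) (α β : Equiv.Perm G)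
    (hα : α e = (e : G)) (hβ : β e = (e : G)) :
    (gyrPerm a (α b) * Lperm (inv (α b)) * α * Lperm b * β) e = (e : G) ∧
      Lperm a * α * (Lperm b * β) =
        Lperm (op a (α b)) *
          (gyrPerm a (α b) * Lperm (inv (α b)) * α * Lperm b * β) := by
  constructor
  · simp only [Equiv.Perm.mul_apply, hβ, Lperm_apply, gyrPerm_apply, op_e_right, op_inv,
      gyr_e_right]
  · ext x
    simp only [Equiv.Perm.mul_apply, Lperm_apply, gyrPerm_apply]
    rw [← gyrassoc, left_cancel']
end

section
/- Let G be a gyrogroup and let Σ be a subgroup of the symmetric group Sym(G). Then Σ contains all left gyrotranslations of G (i.e., Ĝ = {L_a : a ∈ G} ⊆ Σ) if and only if Γ_m ⊆ Σ. -/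
open Gyrogroup in
/-- A subgroup `Σ` of `Sym(G)` contains all left gyrotranslations of a gyrogroup `G`
if and only if it contains `Γₘ`. -/
theorem stmt8 {G : Type*} [Gyrogroup G] (Sg : Subgroup (Equiv.Perm G)) :
    {π : Equiv.Perm G | ∃ a : G, π = Lperm a} ⊆ (Sg : Set (Equiv.Perm G)) ↔
      Γm G ⊆ (Sg : Set (Equiv.Perm G)) := by
  have factor : ∀ a b : G, Lperm a * Lperm b = Lperm (op a b) * gyrPerm a b := by
    intro a b
    ext c
    simp [Lperm, gyrPerm, Equiv.ofBijective_apply, gyrassoc]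
  constructor
  · intro hL T hT
    obtain ⟨a, γ, hγ, rfl⟩ := hT
    have hLmem : ∀ x : G, Lperm x ∈ Sg := fun x => hL ⟨x, rfl⟩
    have hgyr : ∀ x y : G, gyrPerm x y ∈ Sg := by
      intro x y
      have : gyrPerm x y = (Lperm (op x y))⁻¹ * (Lperm x * Lperm y) := by
        rw [factor, ← mul_assoc, inv_mul_cancel, one_mul]
      rw [this]
      exact Sg.mul_mem (Sg.inv_mem (hLmem _)) (Sg.mul_mem (hLmem _) (hLmem _))
    have hGYR : GYR G ≤ Sg := by
      rw [GYR, Subgroup.closure_le]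
      rintro π ⟨x, y, rfl⟩
      exact hgyr x y
    exact Sg.mul_mem (hLmem a) (hGYR hγ)
  · intro hΓ π hπ
    obtain ⟨a, rfl⟩ := hπ
    exact hΓ ⟨a, 1, (GYR G).one_mem, (mul_one _).symm⟩
end

section
/- Let G be a gyrogroup with at least three distinct elements. If the right nucleus N_r(G) = {c ∈ G : gyr[a,b]c = c for all a, b ∈ G} is nontrivial (i.e., contains a nonidentity element), then the geometry (G, Γ_m) is not n-transitive for all n ≥ 2. -/
/-- The geometry `(S, 𝒯)` is `n`-transitive: `S` has at least `n` distinct elements, and any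
`n` pairwise distinct points can be mapped to any `n` pairwise distinct points by a single
transformation of `𝒯`. -/
def IsNTransitive {S : Type*} (𝒯 : Set (Equiv.Perm S)) (n : ℕ) : Prop :=
  (∃ x : Fin n → S, Function.Injective x) ∧
    ∀ x y : Fin n → S, Function.Injective x → Function.Injective y →
      ∃ t ∈ 𝒯, ∀ i, t (x i) = y i


/-!
Every transformation of `Γₘ` commutes with the right translation `x ↦ x ⊕ c` by a right-nucleus
element `c`: gyroautomorphisms fix `c`, and `a ⊕ (x ⊕ c) = (a ⊕ x) ⊕ gyr[a, x] c`. Hence a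
transformation fixing `e` also fixes `e ⊕ c = c`, so the pair `(e, c)` cannot be sent to `(e, w)`
for a third point `w`, which rules out 2-transitivity and therefore every `n`-transitivity
with `n ≥ 2`.
-/

open Function

lemma exists_ne_ne_of_three_distinct {α : Type*} (h3 : ∃ x y z : α, x ≠ y ∧ x ≠ z ∧ y ≠ z)
    (a b : α) : ∃ w, w ≠ a ∧ w ≠ b := by
  obtain ⟨x, y, z, hxy, hxz, hyz⟩ := h3
  by_contra! h
  rcases eq_or_ne x a with rfl | hxa
  · exact hyz ((h y hxy.symm).trans (h z hxz.symm).symm)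
  · have hxb := h x hxa
    have hya : y = a := by_contra fun hya => hxy (hxb.trans (h y hya).symm)
    exact hxz (hxb.trans (h z (hya ▸ hyz.symm)).symm)

lemma exists_injective_fin_extending_pair {α : Type*} {n : ℕ} (hn : 2 ≤ n)
    (hα : ∃ x : Fin n → α, Injective x) {a b : α} (hab : a ≠ b) :
    ∃ u : Fin n ↪ α, u (Fin.castLE hn 0) = a ∧ u (Fin.castLE hn 1) = b := by
  obtain ⟨x, hx⟩ := hα
  obtain ⟨u, hu⟩ := Fin.Embedding.restrictSurjective_of_le_ENatCard hn
    (by simpa using ENat.card_le_card_of_injective hx) (Embedding.embFinTwo hab)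
  exact ⟨u, congrArg (· 0) hu, congrArg (· 1) hu⟩

lemma IsNTransitive.exists_apply_eq_apply_eq {S : Type*} {𝒯 : Set (Equiv.Perm S)} {n : ℕ}
    (h : IsNTransitive 𝒯 n) (hn : 2 ≤ n) {a b a' b' : S} (hab : a ≠ b) (hab' : a' ≠ b') :
    ∃ t ∈ 𝒯, t a = a' ∧ t b = b' := by
  obtain ⟨u, hu₀, hu₁⟩ := exists_injective_fin_extending_pair hn h.1 hab
  obtain ⟨v, hv₀, hv₁⟩ := exists_injective_fin_extending_pair hn h.1 hab'
  obtain ⟨t, ht, htuv⟩ := h.2 u v u.injective v.injective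
  exact ⟨t, ht, hu₀ ▸ hv₀ ▸ htuv _, hu₁ ▸ hv₁ ▸ htuv _⟩

namespace Gyrogroup

def rightNucleus (G : Type*) [Gyrogroup G] : Set G :=
  {c | ∀ a b : G, gyr a b c = c}

variable {G : Type*} [Gyrogroup G] {c : G}

lemma apply_op_of_mem_GYR (hc : c ∈ rightNucleus G) {γ : Equiv.Perm G} (hγ : γ ∈ GYR G)
    (x : G) : γ (op x c) = op (γ x) c := by
  induction hγ using Subgroup.closure_induction generalizing x with
  | mem _ hπ =>
    obtain ⟨a, b, rfl⟩ := hπ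
    exact (gyr_op a b x c).trans (congrArg _ (hc a b))
  | one => rfl
  | mul γ δ _ _ hγ hδ => exact (congrArg γ (hδ x)).trans (hγ (δ x))
  | inv γ _ hγ =>
    apply γ.injective
    simp only [hγ, Equiv.Perm.coe_inv, Equiv.apply_symm_apply]

lemma apply_op_of_mem_Γm (hc : c ∈ rightNucleus G) {t : Equiv.Perm G} (ht : t ∈ Γm G) (x : G) :
    t (op x c) = op (t x) c := by
  obtain ⟨a, γ, hγ, rfl⟩ := ht
  change op a (γ (op x c)) = op (op a (γ x)) c
  rw [apply_op_of_mem_GYR hc hγ, gyrassoc, hc]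

lemma apply_eq_self_of_mem_Γm_of_apply_e (hc : c ∈ rightNucleus G) {t : Equiv.Perm G}
    (ht : t ∈ Γm G) (hte : t e = e) : t c = c := by
  simpa only [op_e, hte] using apply_op_of_mem_Γm hc ht e

end Gyrogroup

open Gyrogroup in
/-- Let `G` be a gyrogroup with at least three distinct elements. If the right nucleus
`N_r(G) = {c ∈ G : gyr[a,b]c = c for all a, b}` is nontrivial, then `(G, Γₘ)` is not
`n`-transitive for any `n ≥ 2`. -/
theorem stmt13 {G : Type*} [Gyrogroup G]
    (h3 : ∃ x y z : G, x ≠ y ∧ x ≠ z ∧ y ≠ z)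
    (hnr : ∃ c : G, c ≠ e ∧ ∀ a b : G, gyr a b c = c) :
    ∀ n : ℕ, 2 ≤ n → ¬ IsNTransitive (Γm G) n := by
  obtain ⟨c, hce, hc⟩ := hnr
  intro n hn htrans
  obtain ⟨w, hwe, hwc⟩ := exists_ne_ne_of_three_distinct h3 e c
  obtain ⟨t, ht, hte, htc⟩ := htrans.exists_apply_eq_apply_eq hn hce.symm hwe.symm
  exact hwc (htc ▸ apply_eq_self_of_mem_Γm_of_apply_e hc ht hte)
end
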